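/- arXiv:1405.0792 — 9 statements merged into one kernel-verified Lean document; each statement's English description precedes it below -/
import Mathlib

section
/- Let r ≥ 1, s ≥ 1 and n ≥ rs be integers. If some randomized membership-query algorithm with query budget m learns every s-term r-MDNF function on {0,1}^n with probability at least 3/4, then 2^{m+1} ≥ (C(⌊n/s⌋, r))^s, i.e. m ≥ s·log₂ C(⌊n/s⌋, r) − 1. -/
/-- The transcript of a deterministic adaptive membership-query algorithm with query map `σ`
run on target `f` for `m` queries: the list `(b₁, …, b_m)` with `b_i = f (σ (b₁, …, b_{i-1}))`. -/
def transcript {n : ℕ} (σ : List Bool → (Fin n → Bool)) (f : (Fin n → Bool) → Bool) :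
    ℕ → List Bool
  | 0 => []
  | m + 1 => transcript σ f m ++ [f (σ (transcript σ f m))]

/-- `f : {0,1}^n → {0,1}` is an `s`-term `r`-MDNF if there are `p ≤ s` nonempty subsets
`T₁, …, T_p` of the coordinates, each of size at most `r`, such that `f a = 1` iff
for some `i` all coordinates of `a` indexed by `T i` equal `1`. -/
def IsMDNF (n s r : ℕ) (f : (Fin n → Bool) → Bool) : Prop :=
  ∃ (p : ℕ) (T : Fin p → Finset (Fin n)), p ≤ s ∧
    (∀ i, (T i).Nonempty ∧ (T i).card ≤ r) ∧
    ∀ a : Fin n → Bool, f a = true ↔ ∃ i, ∀ j ∈ T i, a j = true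

lemma transcript_length {n : ℕ} (σ : List Bool → (Fin n → Bool)) (f : (Fin n → Bool) → Bool)
    (m : ℕ) : (transcript σ f m).length = m := by
  induction m with
  | zero => rfl
  | succ m ih => simp [transcript, ih]

def coordAux (n s k : ℕ) (h : s * k ≤ n) (i : Fin s) (j : Fin k) : Fin n :=
  ⟨i.1 * k + j.1, by
    have hj := j.2
    have hi := i.2
    calc i.1 * k + j.1 < i.1 * k + k := by omega
      _ = (i.1 + 1) * k := by ring
      _ ≤ s * k := Nat.mul_le_mul_right _ hi
      _ ≤ n := h⟩

lemma coordAux_inj {n s k : ℕ} {h : s * k ≤ n} {i i' : Fin s} {j j' : Fin k}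
    (he : coordAux n s k h i j = coordAux n s k h i' j') : i = i' ∧ j = j' := by
  have hk : 0 < k := Nat.pos_of_ne_zero (by intro hk0; exact absurd j.2 (by omega))
  have hval : i.1 * k + j.1 = i'.1 * k + j'.1 := congrArg Fin.val he
  have hdiv : (i.1 * k + j.1) / k = (i'.1 * k + j'.1) / k := by rw [hval]
  have h1 : (i.1 * k + j.1) / k = i.1 := by
    rw [add_comm, Nat.add_mul_div_right _ _ hk, Nat.div_eq_of_lt j.2, zero_add]
  have h2 : (i'.1 * k + j'.1) / k = i'.1 := by
    rw [add_comm, Nat.add_mul_div_right _ _ hk, Nat.div_eq_of_lt j'.2, zero_add]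
  have hii : i.1 = i'.1 := by rw [← h1, ← h2, hval]
  refine ⟨Fin.ext hii, Fin.ext ?_⟩
  have : i.1 * k = i'.1 * k := by rw [hii]
  omega

def famF (n s k : ℕ) (h : s * k ≤ n) (x : Fin s → Finset (Fin k)) : (Fin n → Bool) → Bool :=
  fun a => decide (∃ i : Fin s, ∀ j ∈ x i, a (coordAux n s k h i j) = true)


/-- If a randomized membership-query algorithm with query budget `m` learns every `s`-term
`r`-MDNF function on `{0,1}^n` with probability at least `3/4` (for `r, s ≥ 1`, `n ≥ rs`),
then `2 ^ (m + 1) ≥ C(⌊n/s⌋, r)^s`. -/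
theorem randomized_lower_bound_MDNF
    (n r s m : ℕ) (hr : 1 ≤ r) (hs : 1 ≤ s) (hn : r * s ≤ n)
    (Ω : Type) [Fintype Ω] [Nonempty Ω]
    (σ : Ω → List Bool → (Fin n → Bool))
    (out : Ω → List Bool → ((Fin n → Bool) → Bool))
    (hlearn : ∀ f : (Fin n → Bool) → Bool, IsMDNF n s r f →
      (3 : ℝ) / 4 ≤
        ((Finset.univ.filter fun ω : Ω => out ω (transcript (σ ω) f m) = f).card : ℝ) /
          (Fintype.card Ω : ℝ)) :
    (Nat.choose (n / s) r) ^ s ≤ 2 ^ (m + 1) := by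
  classical
  set k := n / s with hkdef
  have hs0 : 0 < s := hs
  have hrk : r ≤ k := (Nat.le_div_iff_mul_le hs0).2 hn
  have hks : s * k ≤ n := by rw [hkdef, mul_comm]; exact Nat.div_mul_le_self n s
  set F : (Fin s → {S : Finset (Fin k) // S.card = r}) → ((Fin n → Bool) → Bool) :=
    fun x => famF n s k hks (fun i => (x i).1) with hFdef
  -- every F x is an s-term r-MDNF
  have hMDNF : ∀ x : (Fin s → {S : Finset (Fin k) // S.card = r}), IsMDNF n s r (F x) := by
    intro x
    refine ⟨s, fun i => ((x i).1).image (coordAux n s k hks i), le_refl s, ?_, ?_⟩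
    · intro i
      constructor
      · refine Finset.Nonempty.image ?_ _
        rw [← Finset.card_pos, (x i).2]; omega
      · calc (((x i).1).image (coordAux n s k hks i)).card ≤ ((x i).1).card :=
              Finset.card_image_le
          _ ≤ r := le_of_eq (x i).2
    · intro a
      simp only [hFdef, famF, decide_eq_true_eq]
      constructor
      · rintro ⟨i, hi⟩
        refine ⟨i, fun j hj => ?_⟩
        rw [Finset.mem_image] at hj
        obtain ⟨j0, hj0, rfl⟩ := hj
        exact hi j0 hj0
      · rintro ⟨i, hi⟩
        exact ⟨i, fun j hj => hi _ (Finset.mem_image_of_mem _ hj)⟩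
  -- F is injective
  have hFinj : Function.Injective F := by
    intro x y hxy
    funext i
    set a : Fin n → Bool :=
      fun t => decide (∃ j ∈ (x i).1, coordAux n s k hks i j = t) with hadef
    have hx1 : F x a = true := by
      simp only [hFdef, famF, decide_eq_true_eq]
      refine ⟨i, fun j hj => ?_⟩
      simp only [hadef, decide_eq_true_eq]
      exact ⟨j, hj, rfl⟩
    have hy1 : F y a = true := by rw [← hxy]; exact hx1
    simp only [hFdef, famF, decide_eq_true_eq, hadef] at hy1
    obtain ⟨i', hi'⟩ := hy1
    obtain ⟨j0, hj0⟩ : ((y i').1).Nonempty := by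
      rw [← Finset.card_pos, (y i').2]; omega
    obtain ⟨j1, hj1, hje1⟩ :
        ∃ j1 ∈ (x i).1, coordAux n s k hks i j1 = coordAux n s k hks i' j0 := by
      have := hi' j0 hj0
      simpa only [decide_eq_true_eq] using this
    obtain ⟨hii, -⟩ := coordAux_inj hje1
    subst hii
    have hsub : (y i).1 ⊆ (x i).1 := by
      intro j' hj'
      obtain ⟨j2, hj2, hje2⟩ :
          ∃ j2 ∈ (x i).1, coordAux n s k hks i j2 = coordAux n s k hks i j' := by
        have := hi' j' hj'
        simpa only [decide_eq_true_eq] using this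
      obtain ⟨-, hjj⟩ := coordAux_inj hje2
      exact hjj ▸ hj2
    exact Subtype.ext
      ((Finset.eq_of_subset_of_card_le hsub (by rw [(x i).2, (y i).2])).symm)
  -- per-ω bound: a fixed deterministic algorithm learns at most 2^m members of the family
  have hω : ∀ ω : Ω,
      (Finset.univ.filter fun x : (Fin s → {S : Finset (Fin k) // S.card = r}) =>
        out ω (transcript (σ ω) (F x) m) = F x).card ≤ 2 ^ m := by
    intro ω
    have hinj : Set.InjOn
        (fun x : (Fin s → {S : Finset (Fin k) // S.card = r}) => fun i : Fin m => (transcript (σ ω) (F x) m).getD i false)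
        ↑(Finset.univ.filter fun x : (Fin s → {S : Finset (Fin k) // S.card = r}) =>
          out ω (transcript (σ ω) (F x) m) = F x) := by
      intro x hx y hy hG
      simp only [Finset.coe_filter, Set.mem_setOf_eq] at hx hy
      have hlist : transcript (σ ω) (F x) m = transcript (σ ω) (F y) m := by
        apply List.ext_getElem (by rw [transcript_length, transcript_length])
        intro i h1 h2
        have hi : i < m := by rwa [transcript_length] at h1
        have := congrFun hG ⟨i, hi⟩
        simpa only [List.getD_eq_getElem _ _ h1, List.getD_eq_getElem _ _ h2] using this
      apply hFinj
      rw [← hx.2, ← hy.2, hlist]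
    calc (Finset.univ.filter fun x : (Fin s → {S : Finset (Fin k) // S.card = r}) =>
          out ω (transcript (σ ω) (F x) m) = F x).card
        ≤ (Finset.univ : Finset (Fin m → Bool)).card :=
          Finset.card_le_card_of_injOn _ (fun _ _ => Finset.mem_univ _) hinj
      _ = 2 ^ m := by simp [Finset.card_univ]
  -- per-x bound from the learning hypothesis
  have hx : ∀ x : (Fin s → {S : Finset (Fin k) // S.card = r}), 3 * Fintype.card Ω ≤
      4 * (Finset.univ.filter fun ω : Ω =>
        out ω (transcript (σ ω) (F x) m) = F x).card := by
    intro x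
    have h := hlearn (F x) (hMDNF x)
    have hΩ : (0 : ℝ) < (Fintype.card Ω : ℝ) := by
      exact_mod_cast Fintype.card_pos
    rw [div_le_div_iff₀ (by norm_num) hΩ] at h
    have h' : (3 : ℝ) * Fintype.card Ω ≤
        4 * ((Finset.univ.filter fun ω : Ω =>
          out ω (transcript (σ ω) (F x) m) = F x).card : ℝ) := by linarith
    exact_mod_cast h'
  -- double counting
  have hdc : (∑ x : (Fin s → {S : Finset (Fin k) // S.card = r}), (Finset.univ.filter fun ω : Ω =>
        out ω (transcript (σ ω) (F x) m) = F x).card)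
      = ∑ ω : Ω, (Finset.univ.filter fun x : (Fin s → {S : Finset (Fin k) // S.card = r}) =>
        out ω (transcript (σ ω) (F x) m) = F x).card := by
    simp only [Finset.card_filter]
    exact Finset.sum_comm
  -- family size
  have hN : Fintype.card (Fin s → {S : Finset (Fin k) // S.card = r}) = (Nat.choose k r) ^ s := by
    rw [Fintype.card_fun, Fintype.card_finset_len, Fintype.card_fin, Fintype.card_fin]
  -- combine
  have hmain : 3 * ((Nat.choose k r) ^ s * Fintype.card Ω) ≤
      4 * (Fintype.card Ω * 2 ^ m) := by
    calc 3 * ((Nat.choose k r) ^ s * Fintype.card Ω)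
        = ∑ _x : (Fin s → {S : Finset (Fin k) // S.card = r}), 3 * Fintype.card Ω := by
          rw [Finset.sum_const, Finset.card_univ, hN, smul_eq_mul]; ring
      _ ≤ ∑ x : (Fin s → {S : Finset (Fin k) // S.card = r}), 4 * (Finset.univ.filter fun ω : Ω =>
            out ω (transcript (σ ω) (F x) m) = F x).card :=
          Finset.sum_le_sum fun x _ => hx x
      _ = 4 * ∑ x : (Fin s → {S : Finset (Fin k) // S.card = r}), (Finset.univ.filter fun ω : Ω =>
            out ω (transcript (σ ω) (F x) m) = F x).card := by
          rw [Finset.mul_sum]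
      _ = 4 * ∑ ω : Ω, (Finset.univ.filter fun x : (Fin s → {S : Finset (Fin k) // S.card = r}) =>
            out ω (transcript (σ ω) (F x) m) = F x).card := by rw [hdc]
      _ ≤ 4 * ∑ _ω : Ω, 2 ^ m := by
          exact Nat.mul_le_mul_left _ (Finset.sum_le_sum fun ω _ => hω ω)
      _ = 4 * (Fintype.card Ω * 2 ^ m) := by
          rw [Finset.sum_const, Finset.card_univ, smul_eq_mul]
  have hΩpos : 0 < Fintype.card Ω := Fintype.card_pos
  have h3 : 3 * (Nat.choose k r) ^ s ≤ 4 * 2 ^ m := by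
    have := hmain
    nlinarith [hΩpos, this]
  have : 2 ^ (m + 1) = 2 * 2 ^ m := by ring
  omega
end

section
/- Let t ≥ 2, m ≥ 1 and n ≥ mt be integers, and for i = 1,…,m let B_i = {(i−1)t+1,…,it}. Define f : {0,1}^n → {0,1} by f(a) = 1 iff a_j = 1 for all j in some B_i, and for each k = (k_1,…,k_m) ∈ {1,…,t}^m define g_k(a) = 1 iff f(a) = 1 or a_j = 1 for every j ∈ ⋃_{i=1}^m (B_i \ {(i−1)t+k_i}). Then: (i) the set {a : g_k(a) ≠ f(a)} equals D_k := {a : a_{(i−1)t+k_i} = 0 for every i, and a_j = 1 for every j ≤ mt not of the form (i−1)t+k_i}; (ii) each D_k is nonempty; (iii) D_k and D_{k'} are disjoint whenever k ≠ k'; and (iv) for any integers s ≥ m+1 and r ≥ max(t, m(t−1)), the functions f and every g_k are s-term r-MDNF. -/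
open Finset

theorem exists_forall_iff_exists_of_forall_ne {ι κ : Type*} {P : ι → κ → Prop} {k : ι → κ}
    (h : ∀ i v, v ≠ k i → P i v) : (∃ i, ∀ v, P i v) ↔ ∃ i, P i (k i) :=
  ⟨fun ⟨i, hi⟩ => ⟨i, hi _⟩,
    fun ⟨i, hi⟩ => ⟨i, fun v => (eq_or_ne v (k i)).elim (· ▸ hi) (h i v)⟩⟩

theorem Bool.ne_iff_of_eq_true_iff_or {b c : Bool} {R : Prop} (h : c = true ↔ b = true ∨ R) :
    c ≠ b ↔ b = false ∧ R := by
  cases b <;> cases c <;> simp_all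

theorem Nat.mul_add_lt_mul {i m v t : ℕ} (hi : i < m) (hv : v < t) : i * t + v < m * t := by
  nlinarith

section MDNF

variable {n s r : ℕ} {f g : (Fin n → Bool) → Bool}

theorem IsMDNF.mono {s' r' : ℕ} (h : IsMDNF n s r f) (hs : s ≤ s') (hr : r ≤ r') :
    IsMDNF n s' r' f := by
  obtain ⟨p, T, hp, hT, hf⟩ := h
  exact ⟨p, T, hp.trans hs, fun i => ⟨(hT i).1, (hT i).2.trans hr⟩, hf⟩

theorem IsMDNF.or_term (h : IsMDNF n s r f) {S : Finset (Fin n)} (hS : S.Nonempty)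
    (hSr : #S ≤ r) (hg : ∀ a, g a = true ↔ f a = true ∨ ∀ j ∈ S, a j = true) :
    IsMDNF n (s + 1) r g := by
  obtain ⟨p, T, hp, hT, hf⟩ := h
  refine ⟨p + 1, Fin.lastCases S T, by omega, Fin.forall_fin_succ'.2 ⟨?_, ?_⟩, fun a => ?_⟩
  · simpa using hT
  · simpa using ⟨hS, hSr⟩
  · simp only [hg, hf, Fin.exists_fin_succ', Fin.lastCases_castSucc, Fin.lastCases_last]

end MDNF

namespace HardFamily

variable {t m n : ℕ} (hn : m * t ≤ n)

def coord (i : Fin m) (v : Fin t) : Fin n :=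
  ⟨i * t + v, (Nat.mul_add_lt_mul i.isLt v.isLt).trans_le hn⟩

theorem coord_val (i : Fin m) (v : Fin t) : (coord hn i v : ℕ) = i * t + v := rfl

theorem coord_inj {i i' : Fin m} {v v' : Fin t} :
    coord hn i v = coord hn i' v' ↔ i = i' ∧ v = v' := by
  refine ⟨fun h => ?_, fun h => by rw [h.1, h.2]⟩
  have ht : 0 < t := v.pos
  have hval : (v : ℕ) + i * t = v' + i' * t := by simpa [coord, add_comm] using h
  have hdiv := congrArg (· / t) hval
  have hmod := congrArg (· % t) hval
  simp only [Nat.add_mul_div_right _ _ ht, Nat.add_mul_mod_self_right,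
    Nat.div_eq_of_lt v.isLt, Nat.div_eq_of_lt v'.isLt, Nat.mod_eq_of_lt v.isLt,
    Nat.mod_eq_of_lt v'.isLt, zero_add] at hdiv hmod
  exact ⟨Fin.ext hdiv, Fin.ext hmod⟩

theorem forall_block_iff (p : Fin n → Prop) (i : Fin m) :
    (∀ j : Fin n, i.val * t ≤ j.val → j.val < (i.val + 1) * t → p j) ↔
      ∀ v : Fin t, p (coord hn i v) := by
  refine ⟨fun h v => h _ (by simp [coord_val]) (by simp [coord_val, add_mul]),
    fun h j hij hji => ?_⟩
  rw [add_mul, one_mul] at hji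
  have hj : j = coord hn i ⟨j - i * t, by omega⟩ := Fin.ext (by simp [coord_val]; omega)
  exact hj ▸ h _

theorem forall_pivot_iff (p : Fin n → Prop) (k : Fin m → Fin t) :
    (∀ (i : Fin m) (j : Fin n), j.val = i.val * t + (k i).val → p j) ↔
      ∀ i, p (coord hn i (k i)) :=
  ⟨fun h i => h i _ rfl, fun h i j hj => (Fin.ext hj : j = coord hn i (k i)) ▸ h i⟩

theorem forall_offPivot_iff (p : Fin n → Prop) (k : Fin m → Fin t) :
    (∀ j : Fin n, j.val < m * t → (∀ i : Fin m, j.val ≠ i.val * t + (k i).val) → p j) ↔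
      ∀ i v, v ≠ k i → p (coord hn i v) := by
  constructor
  · refine fun h i v hv => h _ (Nat.mul_add_lt_mul i.isLt v.isLt) fun i' he => hv ?_
    obtain ⟨rfl, rfl⟩ := (coord_inj hn).1 (Fin.ext he : coord hn i v = coord hn i' (k i'))
    rfl
  · intro h j hj hne
    have ht : 0 < t := Nat.pos_of_ne_zero (by rintro rfl; simp at hj)
    let i : Fin m := ⟨j / t, Nat.div_lt_of_lt_mul (by rwa [mul_comm])⟩
    let v : Fin t := ⟨j % t, Nat.mod_lt _ ht⟩
    have hj : j = coord hn i v := Fin.ext (Nat.div_add_mod' j t).symm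
    exact hj ▸ h i v fun hv => hne i (by rw [hj, coord_val, hv])

def block (i : Fin m) : Finset (Fin n) := univ.image (coord hn i)

def offPivots (k : Fin m → Fin t) : Finset (Fin n) :=
  univ.biUnion fun i => (univ.erase (k i)).image (coord hn i)

theorem forall_mem_block_iff (p : Fin n → Prop) (i : Fin m) :
    (∀ j ∈ block hn i, p j) ↔ ∀ v, p (coord hn i v) := by
  simp [block]

theorem forall_mem_offPivots_iff (p : Fin n → Prop) (k : Fin m → Fin t) :
    (∀ j ∈ offPivots hn k, p j) ↔ ∀ i v, v ≠ k i → p (coord hn i v) := by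
  simp only [offPivots, mem_biUnion, mem_image, mem_erase]
  aesop

theorem card_block_le (i : Fin m) : #(block hn i) ≤ t :=
  card_image_le.trans (by simp)

theorem block_nonempty (ht : 0 < t) (i : Fin m) : (block hn i).Nonempty :=
  ⟨coord hn i ⟨0, ht⟩, mem_image_of_mem _ (mem_univ _)⟩

theorem card_offPivots_le (k : Fin m → Fin t) : #(offPivots hn k) ≤ m * (t - 1) := by
  unfold offPivots
  simpa using card_biUnion_le_card_mul univ _ (t - 1)
    fun i _ => card_image_le.trans (by simp [card_erase_of_mem] : #(univ.erase (k i)) ≤ t - 1)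

theorem offPivots_nonempty (ht : 2 ≤ t) (hm : 1 ≤ m) (k : Fin m → Fin t) :
    (offPivots hn k).Nonempty := by
  have := Fin.nontrivial_iff_two_le.2 ht
  let i : Fin m := ⟨0, hm⟩
  obtain ⟨v, hv⟩ := exists_ne (k i)
  exact ⟨coord hn i v, mem_biUnion.2 ⟨i, mem_univ _, mem_image_of_mem _ (by simpa using hv)⟩⟩

end HardFamily

open HardFamily in
/-- The hard family for the lower bound.  The blocks are `B_i = {i·t, …, (i+1)·t − 1}`
(0-indexed) for `i < m`; `f a = 1` iff `a` is all-ones on some block `B_i`;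
for `k : Fin m → Fin t`, `g k a = 1` iff `f a = 1` or `a` is all-ones on
`⋃_i (B_i \ {i·t + k i})`; and `D k` is the set of assignments that are `0` at every
coordinate `i·t + k i` and `1` at every other coordinate `< m·t`.  Then
(i) `{a | g k a ≠ f a} = D k`; (ii) each `D k` is nonempty; (iii) the `D k` are pairwise
disjoint; (iv) for `s ≥ m + 1` and `r ≥ max t (m·(t−1))`, `f` and every `g k` are
`s`-term `r`-MDNF. -/
theorem hard_family_properties
    (t m n : ℕ) (ht : 2 ≤ t) (hm : 1 ≤ m) (hn : m * t ≤ n)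
    (f : (Fin n → Bool) → Bool)
    (g : (Fin m → Fin t) → (Fin n → Bool) → Bool)
    (D : (Fin m → Fin t) → Set (Fin n → Bool))
    (hf : ∀ a : Fin n → Bool,
      f a = true ↔ ∃ i : Fin m, ∀ j : Fin n,
        i.val * t ≤ j.val → j.val < (i.val + 1) * t → a j = true)
    (hg : ∀ (k : Fin m → Fin t) (a : Fin n → Bool),
      g k a = true ↔ (f a = true ∨
        ∀ j : Fin n, j.val < m * t →
          (∀ i : Fin m, j.val ≠ i.val * t + (k i).val) → a j = true))
    (hD : ∀ (k : Fin m → Fin t) (a : Fin n → Bool),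
      a ∈ D k ↔ ((∀ (i : Fin m) (j : Fin n), j.val = i.val * t + (k i).val → a j = false) ∧
        (∀ j : Fin n, j.val < m * t →
          (∀ i : Fin m, j.val ≠ i.val * t + (k i).val) → a j = true))) :
    (∀ k : Fin m → Fin t, {a : Fin n → Bool | g k a ≠ f a} = D k) ∧
    (∀ k : Fin m → Fin t, (D k).Nonempty) ∧
    (∀ k k' : Fin m → Fin t, k ≠ k' → D k ∩ D k' = ∅) ∧
    (∀ s r : ℕ, m + 1 ≤ s → max t (m * (t - 1)) ≤ r →
      IsMDNF n s r f ∧ ∀ k : Fin m → Fin t, IsMDNF n s r (g k)) := by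
  have hf' a : f a = true ↔ ∃ i, ∀ v, a (coord hn i v) = true :=
    (hf a).trans (exists_congr fun i => forall_block_iff hn _ i)
  have hg' k a : g k a = true ↔ f a = true ∨ ∀ i v, v ≠ k i → a (coord hn i v) = true := by
    rw [hg, forall_offPivot_iff hn (a · = true)]
  have hD' k a : a ∈ D k ↔ (∀ i, a (coord hn i (k i)) = false) ∧
      ∀ i v, v ≠ k i → a (coord hn i v) = true := by
    rw [hD, forall_pivot_iff hn (a · = false), forall_offPivot_iff hn (a · = true)]
  refine ⟨fun k => ?_, fun k => ?_, fun k k' hkk' => ?_, fun s r hs hr => ?_⟩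
  · ext a
    change g k a ≠ f a ↔ _
    rw [hD', Bool.ne_iff_of_eq_true_iff_or (hg' k a)]
    refine and_congr_left fun hR => ?_
    rw [← Bool.not_eq_true, hf', exists_forall_iff_exists_of_forall_ne hR]
    simp
  · refine ⟨fun j => decide (∀ i, j ≠ coord hn i (k i)),
      (hD' k _).2 ⟨fun i => decide_eq_false fun h => h i rfl,
        fun i v hv => by simp [coord_inj, hv]⟩⟩
  · obtain ⟨i, hi⟩ := Function.ne_iff.mp hkk'
    refine Set.eq_empty_iff_forall_notMem.2 fun a ⟨ha, ha'⟩ => ?_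
    have h0 := ((hD' k a).1 ha).1 i
    have h1 := ((hD' k' a).1 ha').2 i (k i) hi
    simp [h0] at h1
  · have hfm : IsMDNF n m r f := ⟨m, block hn, le_rfl,
      fun i => ⟨block_nonempty hn (by omega) i, (card_block_le hn i).trans (le_of_max_le_left hr)⟩,
      fun a => (hf' a).trans (exists_congr fun i => (forall_mem_block_iff hn (a · = true) i).symm)⟩
    refine ⟨hfm.mono (by omega) le_rfl, fun k => (hfm.or_term (offPivots_nonempty hn ht hm k)
      ((card_offPivots_le hn k).trans (le_of_max_le_right hr)) fun a => ?_).mono hs le_rfl⟩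
    rw [hg', forall_mem_offPivots_iff]
end

section
/- Let t ≥ 2, m ≥ 1, s ≥ m+1, r ≥ max(t, m(t−1)) and n ≥ mt be integers. Then every deterministic adaptive membership-query algorithm with query budget Q that exactly learns the class of all s-term r-MDNF functions on {0,1}^n satisfies Q ≥ t^m. -/
section Aux
variable {t m n : ℕ} (hn : m * t ≤ n)

def emb (hn : m * t ≤ n) (i : Fin m) (j : Fin t) : Fin n :=
  Fin.castLE (by rw [mul_comm] at hn; exact hn) (finProdFinEquiv (j, i))

lemma emb_inj {i i' : Fin m} {j j' : Fin t} (h : emb hn i j = emb hn i' j') :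
    i = i' ∧ j = j' := by
  have h2 := Fin.castLE_injective _ h
  have h3 := finProdFinEquiv.injective h2
  exact ⟨congrArg Prod.snd h3, congrArg Prod.fst h3⟩

def fbase (hn : m * t ≤ n) (x : Fin n → Bool) : Bool :=
  decide (∃ i : Fin m, ∀ j : Fin t, x (emb hn i j) = true)

def Sterm (hn : m * t ≤ n) (c : Fin m → Fin t) : Finset (Fin n) :=
  Finset.univ.biUnion fun i => (Finset.univ.erase (c i)).image (emb hn i)

lemma mem_Sterm {c : Fin m → Fin t} {k : Fin n} :
    k ∈ Sterm hn c ↔ ∃ i j, j ≠ c i ∧ emb hn i j = k := by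
  simp [Sterm, Finset.mem_biUnion, Finset.mem_image, Finset.mem_erase]

def fterm (hn : m * t ≤ n) (c : Fin m → Fin t) (x : Fin n → Bool) : Bool :=
  fbase hn x || decide (∀ k ∈ Sterm hn c, x k = true)

def apoint (hn : m * t ≤ n) (c : Fin m → Fin t) : Fin n → Bool :=
  fun k => decide (k ∈ Sterm hn c)

lemma fbase_apoint (c : Fin m → Fin t) : fbase hn (apoint hn c) = false := by
  simp only [fbase, decide_eq_false_iff_not]
  rintro ⟨i, hi⟩
  have := hi (c i)
  simp only [apoint, decide_eq_true_eq, mem_Sterm] at this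
  obtain ⟨i', j', hj', he⟩ := this
  obtain ⟨hi', hj''⟩ := emb_inj hn he
  exact hj' (hj''.trans (by rw [hi']))

lemma fterm_apoint (c : Fin m → Fin t) : fterm hn c (apoint hn c) = true := by
  simp [fterm, apoint]

/-- Disjointness of difference sets. -/
lemma diff_disjoint {c c' : Fin m → Fin t} {x : Fin n → Bool}
    (h1 : fterm hn c x ≠ fbase hn x) (h2 : fterm hn c' x ≠ fbase hn x) : c = c' := by
  by_contra hne
  have hb : fbase hn x = false := by
    cases hb : fbase hn x
    · rfl
    · exact absurd (by simp [fterm, hb]) h1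
  have hc : ∀ k ∈ Sterm hn c, x k = true := by
    by_contra hcon
    exact h1 (by simp [fterm, hb, hcon])
  have hc' : ∀ k ∈ Sterm hn c', x k = true := by
    by_contra hcon
    exact h2 (by simp [fterm, hb, hcon])
  obtain ⟨i, hi⟩ := Function.ne_iff.mp hne
  have hall : ∀ j : Fin t, x (emb hn i j) = true := by
    intro j
    by_cases hj : j = c i
    · exact hc' _ (mem_Sterm hn |>.mpr ⟨i, j, by rw [hj]; exact hi, rfl⟩)
    · exact hc _ (mem_Sterm hn |>.mpr ⟨i, j, hj, rfl⟩)
  have : fbase hn x = true := by simp only [fbase, decide_eq_true_eq]; exact ⟨i, hall⟩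
  simp [this] at hb

lemma transcript_agree {n : ℕ} (σ : List Bool → (Fin n → Bool))
    (f g : (Fin n → Bool) → Bool) (k : ℕ)
    (h : ∀ i < k, f (σ (transcript σ f i)) = g (σ (transcript σ f i))) :
    transcript σ f k = transcript σ g k := by
  induction k with
  | zero => rfl
  | succ k ih =>
    have hk : transcript σ f k = transcript σ g k :=
      ih fun i hi => h i (Nat.lt_succ_of_lt hi)
    show transcript σ f k ++ _ = transcript σ g k ++ _
    rw [← hk, h k (Nat.lt_succ_self k)]

end Aux


/-- For `t ≥ 2`, `m ≥ 1`, `s ≥ m + 1`, `r ≥ max t (m·(t−1))` and `n ≥ m·t`, every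
deterministic adaptive membership-query algorithm with query budget `Q` that exactly learns
the class of all `s`-term `r`-MDNF functions on `{0,1}^n` satisfies `Q ≥ t^m`. -/
theorem deterministic_lower_bound_general
    (t m s r n Q : ℕ) (ht : 2 ≤ t) (hm : 1 ≤ m) (hs : m + 1 ≤ s)
    (hr : max t (m * (t - 1)) ≤ r) (hn : m * t ≤ n)
    (σ : List Bool → (Fin n → Bool)) (out : List Bool → ((Fin n → Bool) → Bool))
    (hlearn : ∀ f : (Fin n → Bool) → Bool, IsMDNF n s r f → out (transcript σ f Q) = f) :
    t ^ m ≤ Q := by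
  have hrt : t ≤ r := le_trans (le_max_left _ _) hr
  have hrm : m * (t - 1) ≤ r := le_trans (le_max_right _ _) hr
  -- the base terms
  set T : Fin m → Finset (Fin n) := fun i => Finset.univ.image (emb hn i) with hT
  have hTcard : ∀ i, (T i).card = t := by
    intro i
    rw [hT]
    rw [Finset.card_image_of_injective _ (fun j j' h => (emb_inj hn h).2)]
    simp
  have htpos : 0 < t := lt_of_lt_of_le two_pos ht
  have hTmem : ∀ i k, k ∈ T i ↔ ∃ j, emb hn i j = k := by
    intro i k; simp [hT]
  -- fbase is MDNF
  have hMD : IsMDNF n s r (fbase hn) := by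
    refine ⟨m, T, le_trans (Nat.le_succ m) hs, fun i => ⟨?_, by rw [hTcard]; exact hrt⟩, fun a => ?_⟩
    · rw [← Finset.card_pos, hTcard]; exact htpos
    · simp only [fbase, decide_eq_true_eq]
      constructor
      · rintro ⟨i, hi⟩
        exact ⟨i, fun k hk => by obtain ⟨j, rfl⟩ := (hTmem i k).mp hk; exact hi j⟩
      · rintro ⟨i, hi⟩
        exact ⟨i, fun j => hi _ ((hTmem i _).mpr ⟨j, rfl⟩)⟩
  -- each fterm is MDNF
  have hMDc : ∀ c : Fin m → Fin t, IsMDNF n s r (fterm hn c) := by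
    intro c
    refine ⟨m + 1, Fin.cons (Sterm hn c) T, hs, ?_, fun a => ?_⟩
    · intro i
      refine Fin.cases ?_ ?_ i
      · simp only [Fin.cons_zero]
        constructor
        · obtain ⟨j, hj⟩ := Finset.exists_mem_ne (s := (Finset.univ : Finset (Fin t)))
            (by rw [Finset.card_univ, Fintype.card_fin]; exact ht) (c ⟨0, hm⟩)
          exact ⟨emb hn ⟨0, hm⟩ j, (mem_Sterm hn).mpr ⟨_, j, hj.2, rfl⟩⟩
        · calc (Sterm hn c).card ≤ ∑ i : Fin m, ((Finset.univ.erase (c i)).image (emb hn i)).card :=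
                Finset.card_biUnion_le
            _ ≤ ∑ _i : Fin m, (t - 1) := by
                refine Finset.sum_le_sum fun i _ => ?_
                calc _ ≤ (Finset.univ.erase (c i)).card := Finset.card_image_le
                  _ = t - 1 := by rw [Finset.card_erase_of_mem (Finset.mem_univ _)]; simp
            _ = m * (t - 1) := by simp [mul_comm]
            _ ≤ r := hrm
      · intro i
        simp only [Fin.cons_succ]
        exact ⟨by rw [← Finset.card_pos, hTcard]; exact htpos, by rw [hTcard]; exact hrt⟩
    · simp only [fterm, Bool.or_eq_true, decide_eq_true_eq, fbase]
      rw [Fin.exists_fin_succ]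
      simp only [Fin.cons_zero, Fin.cons_succ]
      constructor
      · rintro (⟨i, hi⟩ | h)
        · exact Or.inr ⟨i, fun k hk => by obtain ⟨j, rfl⟩ := (hTmem i k).mp hk; exact hi j⟩
        · exact Or.inl h
      · rintro (h | ⟨i, hi⟩)
        · exact Or.inr h
        · exact Or.inl ⟨i, fun j => hi _ ((hTmem i _).mpr ⟨j, rfl⟩)⟩
  -- main adversary argument
  by_contra hQ
  push_neg at hQ
  set x : ℕ → (Fin n → Bool) := fun i => σ (transcript σ (fbase hn) i) with hx
  set P : (Fin m → Fin t) → Prop := fun c => ∃ i, i < Q ∧ fterm hn c (x i) ≠ fbase hn (x i)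
    with hP
  have hPdec : DecidablePred P := fun c => by unfold P; infer_instance
  set B : Finset (Fin m → Fin t) := @Finset.filter _ P hPdec Finset.univ with hB
  have hBcard : B.card ≤ Q := by
    rw [← Finset.card_range Q]
    refine Finset.card_le_card_of_injOn
      (fun c => if h : P c then @Nat.find _ (fun _ => by infer_instance) h else 0) ?_ ?_
    · intro c hc
      have hPc := (Finset.mem_filter.mp hc).2
      simp only [hPc, dif_pos]
      exact Finset.mem_range.mpr (@Nat.find_spec _ (fun _ => by infer_instance) hPc).1
    · intro c hc c' hc' heq
      have hPc := (Finset.mem_filter.mp hc).2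
      have hPc' := (Finset.mem_filter.mp hc').2
      simp only [hPc, hPc', dif_pos] at heq
      have h1 := (@Nat.find_spec _ (fun _ => by infer_instance) hPc).2
      have h2 := (@Nat.find_spec _ (fun _ => by infer_instance) hPc').2
      rw [heq] at h1
      exact diff_disjoint hn h1 h2
  have hex : ∃ c, ¬ P c := by
    by_contra hall
    push_neg at hall
    have : Finset.univ ⊆ B := fun c _ => Finset.mem_filter.mpr ⟨Finset.mem_univ c, hall c⟩
    have h1 : (Finset.univ : Finset (Fin m → Fin t)).card ≤ Q :=
      le_trans (Finset.card_le_card this) hBcard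
    rw [Finset.card_univ, Fintype.card_fun] at h1
    simp only [Fintype.card_fin] at h1
    exact absurd (lt_of_lt_of_le hQ h1) (lt_irrefl Q)
  obtain ⟨c, hc⟩ := hex
  have hagree : ∀ i < Q, fbase hn (x i) = fterm hn c (x i) := by
    intro i hi
    by_contra hne
    exact hc ⟨i, hi, fun h => hne h.symm⟩
  have heqt : transcript σ (fbase hn) Q = transcript σ (fterm hn c) Q :=
    transcript_agree σ _ _ Q (fun i hi => hagree i hi)
  have ht1 := hlearn (fbase hn) hMD
  have ht2 := hlearn (fterm hn c) (hMDc c)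
  rw [heqt] at ht1
  have hfun : fbase hn = fterm hn c := ht1.symm.trans ht2
  have := congrFun hfun (apoint hn c)
  rw [fbase_apoint hn c, fterm_apoint hn c] at this
  exact Bool.false_ne_true this
end

section
/- Let λ ≥ 1, s ≥ 2, r ≥ λs and n ≥ (s−1)(λ+1) be integers. Then every deterministic adaptive membership-query algorithm with query budget Q that exactly learns the class of all s-term r-MDNF functions on {0,1}^n satisfies Q ≥ (λ+1)^{s−1}. -/
namespace MDNFAux

/-- Coordinate `j` of block `i` (blocks of size `L`, `k` blocks). -/
def bcoord {n k L : ℕ} (hn : k * L ≤ n) (i : Fin k) (j : Fin L) : Fin n :=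
  ⟨i.val * L + j.val, by
    have h1 : i.val * L + j.val < (i.val + 1) * L := by
      have := j.isLt; rw [Nat.succ_mul]; omega
    have h2 : (i.val + 1) * L ≤ k * L := Nat.mul_le_mul_right L i.isLt
    omega⟩

lemma bcoord_inj {n k L : ℕ} (hn : k * L ≤ n) {i i' : Fin k} {j j' : Fin L}
    (h : bcoord hn i j = bcoord hn i' j') : i = i' ∧ j = j' := by
  have hL : 0 < L := lt_of_le_of_lt (Nat.zero_le _) j.isLt
  have he : i.val * L + j.val = i'.val * L + j'.val := congrArg Fin.val h
  have hj : j.val = j'.val := by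
    have h1 : (i.val * L + j.val) % L = j.val % L := by
      rw [Nat.mul_comm]; exact Nat.mul_add_mod _ _ _
    have h2 : (i'.val * L + j'.val) % L = j'.val % L := by
      rw [Nat.mul_comm]; exact Nat.mul_add_mod _ _ _
    rw [Nat.mod_eq_of_lt j.isLt] at h1
    rw [Nat.mod_eq_of_lt j'.isLt] at h2
    rw [he, h2] at h1
    exact h1.symm
  have hi : i.val * L = i'.val * L := by omega
  have : i.val = i'.val := Nat.eq_of_mul_eq_mul_right hL hi
  exact ⟨Fin.ext this, Fin.ext hj⟩

/-- Baseline function: OR over blocks of the AND of block coordinates. -/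
def gFun {n k L : ℕ} (hn : k * L ≤ n) : (Fin n → Bool) → Bool :=
  fun a => decide (∃ i : Fin k, ∀ j : Fin L, a (bcoord hn i j) = true)

/-- Perturbed function indexed by `c`. -/
def fFun {n k L : ℕ} (hn : k * L ≤ n) (c : Fin k → Fin L) : (Fin n → Bool) → Bool :=
  fun a => gFun hn a ||
    decide (∀ i : Fin k, ∀ j : Fin L, j ≠ c i → a (bcoord hn i j) = true)

/-- If `f_c` and `g` disagree on `a`, then `a` has the signature of `c`. -/
lemma signature {n k L : ℕ} (hn : k * L ≤ n) (c : Fin k → Fin L) (a : Fin n → Bool)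
    (h : fFun hn c a ≠ gFun hn a) :
    ∀ i : Fin k, ∀ j : Fin L, a (bcoord hn i j) = (decide (j ≠ c i)) := by
  unfold fFun at h
  have hg : gFun hn a = false := by
    cases hge : gFun hn a with
    | false => rfl
    | true => rw [hge] at h; simp at h
  have hX : (∀ i : Fin k, ∀ j : Fin L, j ≠ c i → a (bcoord hn i j) = true) := by
    rw [hg] at h; simpa using h
  intro i j
  by_cases hj : j = c i
  · subst hj
    have hg' : ¬ ∃ i : Fin k, ∀ j : Fin L, a (bcoord hn i j) = true := by
      unfold gFun at hg; simpa using hg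
    push_neg at hg'
    obtain ⟨j', hj'⟩ := hg' i
    by_cases hje : j' = c i
    · rw [hje] at hj'
      simp only [ne_eq, not_true_eq_false, Bool.decide_false]
      simpa using hj'
    · exact absurd (hX i j' hje) hj'
  · simp [hj, hX i j hj]

lemma diff_unique {n k L : ℕ} (hn : k * L ≤ n) (c c' : Fin k → Fin L) (a : Fin n → Bool)
    (h : fFun hn c a ≠ gFun hn a) (h' : fFun hn c' a ≠ gFun hn a) : c = c' := by
  funext i
  have h1 : a (bcoord hn i (c i)) = false := by
    simpa using signature hn c a h i (c i)
  have h2 := signature hn c' a h' i (c i)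
  by_contra hne
  have hne' : c i ≠ c' i := fun e => hne e
  have := h1.symm.trans h2
  simp [hne'] at this

/-- The witness point on which `f_c` and `g` differ. -/
def wit {n k L : ℕ} (hn : k * L ≤ n) (c : Fin k → Fin L) : Fin n → Bool :=
  fun x => decide (∃ i j, j ≠ c i ∧ bcoord hn i j = x)

lemma fFun_ne_gFun {n k L : ℕ} (hn : k * L ≤ n) (c : Fin k → Fin L) :
    fFun hn c ≠ gFun hn := by
  intro he
  have hf : fFun hn c (wit hn c) = true := by
    unfold fFun
    apply Bool.or_eq_true_iff.mpr
    right
    simp only [decide_eq_true_eq]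
    intro i j hj
    simp only [wit, decide_eq_true_eq]
    exact ⟨i, j, hj, rfl⟩
  have hg : gFun hn (wit hn c) = false := by
    unfold gFun
    simp only [decide_eq_false_iff_not]
    push_neg
    intro i
    refine ⟨c i, ?_⟩
    simp only [wit, decide_eq_true_eq]
    intro hcontra
    simp only [decide_eq_true_eq] at hcontra
    obtain ⟨i', j', hj', he'⟩ := hcontra
    obtain ⟨hi, hj⟩ := bcoord_inj hn he'
    exact hj' (by rw [hi, hj])
  rw [he, hg] at hf
  exact Bool.false_ne_true hf

lemma transcript_congr {n : ℕ} (σ : List Bool → (Fin n → Bool))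
    (f g : (Fin n → Bool) → Bool) (Q : ℕ)
    (h : ∀ m < Q, f (σ (transcript σ g m)) = g (σ (transcript σ g m))) :
    transcript σ f Q = transcript σ g Q := by
  induction Q with
  | zero => rfl
  | succ m ih =>
    have e := ih (fun l hl => h l (by omega))
    simp only [transcript, e, h m (by omega)]

end MDNFAux

open MDNFAux

/-- For `λ ≥ 1`, `s ≥ 2`, `r ≥ λ·s` and `n ≥ (s−1)·(λ+1)`, every deterministic adaptive
membership-query algorithm with query budget `Q` that exactly learns the class of all
`s`-term `r`-MDNF functions on `{0,1}^n` satisfies `Q ≥ (λ+1)^(s−1)`. -/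
theorem deterministic_lower_bound_lambda
    (lam s r n Q : ℕ) (hlam : 1 ≤ lam) (hs : 2 ≤ s) (hr : lam * s ≤ r)
    (hn : (s - 1) * (lam + 1) ≤ n)
    (σ : List Bool → (Fin n → Bool)) (out : List Bool → ((Fin n → Bool) → Bool))
    (hlearn : ∀ f : (Fin n → Bool) → Bool, IsMDNF n s r f → out (transcript σ f Q) = f) :
    (lam + 1) ^ (s - 1) ≤ Q := by
  classical
  set k := s - 1 with hk
  set L := lam + 1 with hL
  have hn' : k * L ≤ n := hn
  have hkpos : 1 ≤ k := by omega
  have hL2 : 2 ≤ L := by omega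
  have hLr : L ≤ r := by
    have h2 : lam * 2 ≤ lam * s := Nat.mul_le_mul_left lam hs
    have h3 : lam * s ≤ r := hr
    omega
  have hblk_ne : ∀ i : Fin k,
      (Finset.image (bcoord hn' i) (Finset.univ : Finset (Fin L))).Nonempty :=
    fun i => ⟨bcoord hn' i ⟨0, by omega⟩, Finset.mem_image_of_mem _ (Finset.mem_univ _)⟩
  have hblk_card : ∀ i : Fin k,
      (Finset.image (bcoord hn' i) (Finset.univ : Finset (Fin L))).card ≤ r := by
    intro i
    calc (Finset.image (bcoord hn' i) Finset.univ).card
        ≤ (Finset.univ : Finset (Fin L)).card := Finset.card_image_le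
      _ = L := by simp
      _ ≤ r := hLr
  -- g is an MDNF
  have hg : IsMDNF n s r (gFun (k := k) (L := L) hn') := by
    refine ⟨k, fun i => Finset.image (bcoord hn' i) Finset.univ, by omega,
      fun i => ⟨hblk_ne i, hblk_card i⟩, ?_⟩
    intro a
    unfold gFun
    simp only [decide_eq_true_eq]
    constructor
    · rintro ⟨i, hi⟩
      refine ⟨i, fun x hx => ?_⟩
      simp only [Finset.mem_image, Finset.mem_univ, true_and] at hx
      obtain ⟨j, rfl⟩ := hx
      exact hi j
    · rintro ⟨i, hi⟩
      exact ⟨i, fun j => hi _ (Finset.mem_image_of_mem _ (Finset.mem_univ _))⟩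
  -- each f_c is an MDNF
  have hf : ∀ c : Fin k → Fin L, IsMDNF n s r (fFun hn' c) := by
    intro c
    set bigT : Finset (Fin n) :=
      Finset.univ.biUnion (fun i : Fin k =>
        (Finset.univ.filter (· ≠ c i)).image (bcoord hn' i)) with hbigT
    have hmem : ∀ x, x ∈ bigT ↔ ∃ i j, j ≠ c i ∧ bcoord hn' i j = x := by
      intro x
      simp [hbigT, Finset.mem_biUnion, Finset.mem_image, Finset.mem_filter]
    have hnontriv : Nontrivial (Fin L) := Fin.nontrivial_iff_two_le.mpr hL2
    have hbig_ne : bigT.Nonempty := by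
      set i0 : Fin k := ⟨0, by omega⟩
      obtain ⟨j, hj⟩ := exists_ne (c i0)
      exact ⟨bcoord hn' i0 j, (hmem _).mpr ⟨i0, j, hj, rfl⟩⟩
    have hbig_card : bigT.card ≤ r := by
      calc bigT.card ≤ Finset.univ.sum (fun i : Fin k =>
            ((Finset.univ.filter (· ≠ c i)).image (bcoord hn' i)).card) :=
          Finset.card_biUnion_le
        _ ≤ Finset.univ.sum (fun _ : Fin k => lam) := by
          apply Finset.sum_le_sum
          intro i _
          calc ((Finset.univ.filter (· ≠ c i)).image (bcoord hn' i)).card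
              ≤ (Finset.univ.filter (· ≠ c i)).card := Finset.card_image_le
            _ = L - 1 := by
                rw [Finset.filter_ne']
                rw [Finset.card_erase_of_mem (Finset.mem_univ _)]
                simp
            _ = lam := by omega
        _ = k * lam := by simp [Finset.sum_const]
        _ ≤ r := by
          have h3 : lam * k ≤ lam * s := Nat.mul_le_mul_left lam (by omega)
          rw [mul_comm]
          exact le_trans h3 hr
    refine ⟨k + 1, Fin.cons bigT (fun i => Finset.image (bcoord hn' i) Finset.univ),
      by omega, ?_, ?_⟩
    · intro i
      refine Fin.cases ?_ (fun i' => ?_) i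
      · rw [Fin.cons_zero]
        exact ⟨hbig_ne, hbig_card⟩
      · rw [Fin.cons_succ]
        exact ⟨hblk_ne i', hblk_card i'⟩
    · intro a
      unfold fFun gFun
      simp only [Bool.or_eq_true, decide_eq_true_eq]
      rw [Fin.exists_fin_succ]
      simp only [Fin.cons_zero, Fin.cons_succ]
      constructor
      · rintro (⟨i, hi⟩ | hbig)
        · right
          refine ⟨i, fun x hx => ?_⟩
          simp only [Finset.mem_image, Finset.mem_univ, true_and] at hx
          obtain ⟨j, rfl⟩ := hx
          exact hi j
        · left
          intro x hx
          obtain ⟨i, j, hj, rfl⟩ := (hmem x).mp hx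
          exact hbig i j hj
      · rintro (hbig | ⟨i, hi⟩)
        · right
          intro i j hj
          exact hbig _ ((hmem _).mpr ⟨i, j, hj, rfl⟩)
        · left
          exact ⟨i, fun j => hi _ (Finset.mem_image_of_mem _ (Finset.mem_univ _))⟩
  by_contra hQ
  push_neg at hQ
  -- every c is eliminated by some query along g's run
  have key : ∀ c : Fin k → Fin L, ∃ m : Fin Q,
      fFun hn' c (σ (transcript σ (gFun hn') m.val)) ≠
      gFun hn' (σ (transcript σ (gFun hn') m.val)) := by
    intro c
    by_contra hcon
    push_neg at hcon
    have heq : transcript σ (fFun hn' c) Q = transcript σ (gFun hn') Q :=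
      transcript_congr σ _ _ Q (fun m hm => hcon ⟨m, hm⟩)
    have e1 := hlearn _ (hf c)
    have e2 := hlearn _ hg
    rw [heq, e2] at e1
    exact fFun_ne_gFun hn' c e1.symm
  choose F hF using key
  have Finj : Function.Injective F := by
    intro c c' h
    exact diff_unique hn' c c' _ (hF c) (h ▸ hF c')
  have hcard := Fintype.card_le_of_injective F Finj
  simp only [Fintype.card_fun, Fintype.card_fin] at hcard
  omega
end

section
/- Let f : {0,1}^n → {0,1} be monotone such that every minterm of f has weight at most r, and let b ∈ {0,1}^n with f(b) = 1. Let S_1,…,S_q be pairwise disjoint subsets of {i : b_i = 1} such that for every i ∈ {1,…,q}, f(b^{(i)}) = 0, where b^{(i)} is obtained from b by setting all coordinates in S_i to 0. Then q ≤ r. -/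
/-- A Boolean function is monotone if it is monotone w.r.t. the coordinatewise order. -/
def MonotoneBool {n : ℕ} (f : (Fin n → Bool) → Bool) : Prop :=
  ∀ a b : Fin n → Bool, (∀ i, a i ≤ b i) → f a ≤ f b

/-- A minterm of a monotone Boolean function: a minimal assignment on which `f` is `1`. -/
def IsMinterm {n : ℕ} (f : (Fin n → Bool) → Bool) (a : Fin n → Bool) : Prop :=
  f a = true ∧ ∀ b : Fin n → Bool, (∀ i, b i ≤ a i) → f b = true → b = a

/-- The weight of an assignment: the number of coordinates equal to `1`. -/
def weight {n : ℕ} (a : Fin n → Bool) : ℕ :=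
  (Finset.univ.filter fun i => a i = true).card

/-- Let `f` be monotone with all minterms of weight at most `r`, and `f b = 1`.  If
`S₁, …, S_q` are pairwise disjoint subsets of the support of `b` such that zeroing out
each single `S i` in `b` makes `f` zero, then `q ≤ r`. -/
theorem disjoint_zeroing_sets_bound
    (n r q : ℕ) (f : (Fin n → Bool) → Bool)
    (hmono : MonotoneBool f)
    (hminterms : ∀ a : Fin n → Bool, IsMinterm f a → weight a ≤ r)
    (b : Fin n → Bool) (hb : f b = true)
    (S : Fin q → Finset (Fin n))
    (hsupp : ∀ i, ∀ j ∈ S i, b j = true)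
    (hdisj : ∀ i i' : Fin q, i ≠ i' → Disjoint (S i) (S i'))
    (hzero : ∀ i : Fin q, f (fun j => if j ∈ S i then false else b j) = false) :
    q ≤ r := by
  classical
  -- the set of assignments below b on which f is true
  set T : Finset (Fin n → Bool) :=
    Finset.univ.filter (fun c => (∀ i, c i ≤ b i) ∧ f c = true) with hT
  have hbT : b ∈ T := by simp [hT, hb]
  obtain ⟨a, haT, hamin⟩ := T.exists_min_image weight ⟨b, hbT⟩
  simp only [hT, Finset.mem_filter, Finset.mem_univ, true_and] at haT hamin
  obtain ⟨hab, hfa⟩ := haT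
  -- a is a minterm
  have hmint : IsMinterm f a := by
    refine ⟨hfa, fun c hca hfc => ?_⟩
    have hcb : ∀ i, c i ≤ b i := fun i => le_trans (hca i) (hab i)
    have h1 : weight a ≤ weight c := hamin c ⟨hcb, hfc⟩
    have hsub : (Finset.univ.filter fun i => c i = true) ⊆
        (Finset.univ.filter fun i => a i = true) := by
      intro i hi
      simp only [Finset.mem_filter, Finset.mem_univ, true_and] at hi ⊢
      have := hca i
      rw [hi] at this
      exact Bool.eq_true_of_true_le this
    have heq : (Finset.univ.filter fun i => c i = true) =
        (Finset.univ.filter fun i => a i = true) :=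
      Finset.eq_of_subset_of_card_le hsub h1
    funext i
    by_cases h : a i = true
    · have hi : i ∈ (Finset.univ.filter fun i => c i = true) := by
        rw [heq]
        simp [h]
      simp only [Finset.mem_filter, Finset.mem_univ, true_and] at hi
      rw [hi, h]
    · have ha : a i = false := Bool.eq_false_iff.mpr h
      have hc : c i = false := by
        have := hca i
        rw [ha] at this
        exact Bool.eq_false_iff.mpr fun ht => by rw [ht] at this; exact absurd this (by decide)
      rw [hc, ha]
  -- a meets every S i
  have hmeet : ∀ i : Fin q, ∃ j ∈ S i, a j = true := by
    intro i
    by_contra h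
    push_neg at h
    have hle : ∀ j, a j ≤ (fun j => if j ∈ S i then false else b j) j := by
      intro j
      by_cases hj : j ∈ S i
      · have haj : a j = false := Bool.eq_false_iff.mpr (h j hj)
        simp [hj, haj]
      · simp only [hj, if_neg, ite_false]
        exact hab j
    have := hmono a _ hle
    rw [hfa, hzero i] at this
    exact absurd this (by simp)
  choose t ht hta using hmeet
  have hinj : Function.Injective t := by
    intro i i' h
    by_contra hne
    exact Finset.disjoint_left.mp (hdisj i i' hne) (ht i) (h ▸ ht i')
  have : q ≤ weight a := by
    have : (Finset.univ : Finset (Fin q)).card ≤ (Finset.univ.filter fun i => a i = true).card := by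
      apply Finset.card_le_card_of_injOn t
      · intro i _
        simp [hta i]
      · exact fun i _ i' _ h => hinj h
    simpa [weight] using this
  exact this.trans (hminterms a hmint)
end

section
/- There is a universal constant c > 0 such that for all integers n ≥ 2, r ≥ 1 and every a ∈ {0,1}^n, there exists a deterministic adaptive membership-query algorithm with point-valued output and query budget ⌈c·r·log₂ n⌉ with the following property: for every monotone function f : {0,1}^n → {0,1} such that f(a) = 1 and every minterm of f has weight at most r, the output of the algorithm on the transcript of f is a minterm b of f with b ≤ a. -/
/-!
Write the algorithm as a decision tree of queries: once the budget covers the number of queries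
on the path of `f`, the transcript leads to the leaf, so it suffices to bound that number.

The search keeps a set `X ⊆ supp a` with `f(X) = 1` (call such sets positive) and a set
`F ⊆ X` of coordinates none of which can be removed from `X` without making `f` false. By
monotonicity `F` lies in every minterm below `X`, so `|F| < r` as long as `F` itself is negative,
and `F` is a minterm as soon as it is positive. A round queries `F`; if the answer is `0`, binary
search over the prefixes `P` of an enumeration of `X` finds a coordinate `u` with `F ∪ P`
negative and `F ∪ P ∪ {u}` positive, and the state becomes `F ∪ {u} ⊆ F ∪ P ∪ {u}`. Hence
`r + 1` rounds of at most `⌈log₂ n⌉ + 1` queries suffice.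
-/

inductive QueryTree (Q A : Type*)
  | pure (x : A)
  | query (q : Q) (next : Bool → QueryTree Q A)

namespace QueryTree

variable {Q A B : Type*}

def bind : QueryTree Q A → (A → QueryTree Q B) → QueryTree Q B
  | pure x, g => g x
  | query q next, g => query q fun b => (next b).bind g

def eval (f : Q → Bool) : QueryTree Q A → A
  | pure x => x
  | query q next => (next (f q)).eval f

def cost (f : Q → Bool) : QueryTree Q A → ℕ
  | pure _ => 0
  | query q next => (next (f q)).cost f + 1

theorem eval_bind (f : Q → Bool) (t : QueryTree Q A) (g : A → QueryTree Q B) :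
    (t.bind g).eval f = (g (t.eval f)).eval f := by
  induction t with
  | pure x => rfl
  | query q next ih => exact ih (f q)

theorem cost_bind (f : Q → Bool) (t : QueryTree Q A) (g : A → QueryTree Q B) :
    (t.bind g).cost f = t.cost f + (g (t.eval f)).cost f := by
  induction t with
  | pure x => simp [bind, cost, eval]
  | query q next ih => simp only [bind, cost, eval, ih]; omega

def answer (b : Bool) : QueryTree Q A → QueryTree Q A
  | pure x => pure x
  | query _ next => next b

def follow (t : QueryTree Q A) (l : List Bool) : QueryTree Q A :=
  l.foldl (fun s b => s.answer b) t

def nextQuery [Inhabited Q] : QueryTree Q A → Q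
  | pure _ => default
  | query q _ => q

def result [Inhabited A] : QueryTree Q A → A
  | pure x => x
  | query _ _ => default

def advance [Inhabited Q] (f : Q → Bool) (t : QueryTree Q A) : QueryTree Q A :=
  t.answer (f t.nextQuery)

theorem iterate_advance_of_cost_le [Inhabited Q] (f : Q → Bool) (t : QueryTree Q A) {m : ℕ}
    (hm : t.cost f ≤ m) : (advance f)^[m] t = pure (t.eval f) := by
  induction t generalizing m with
  | pure x => exact Function.iterate_fixed rfl m
  | query q next ih =>
    simp only [cost] at hm
    obtain ⟨m, rfl⟩ := Nat.exists_eq_add_one_of_ne_zero (by omega : m ≠ 0)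
    exact ih (f q) (by omega)

theorem follow_append_singleton (t : QueryTree Q A) (l : List Bool) (b : Bool) :
    t.follow (l ++ [b]) = (t.follow l).answer b := by
  simp [follow]

theorem follow_transcript {n : ℕ} (t : QueryTree (Fin n → Bool) A) (f : (Fin n → Bool) → Bool)
    (m : ℕ) : t.follow (transcript (fun l => (t.follow l).nextQuery) f m) = (advance f)^[m] t := by
  induction m with
  | zero => rfl
  | succ m ih =>
    rw [transcript, follow_append_singleton, ih, Function.iterate_succ_apply']
    rfl

theorem result_follow_transcript {n : ℕ} [Inhabited A] (t : QueryTree (Fin n → Bool) A)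
    (f : (Fin n → Bool) → Bool) {m : ℕ} (hm : t.cost f ≤ m) :
    (t.follow (transcript (fun l => (t.follow l).nextQuery) f m)).result = t.eval f := by
  rw [follow_transcript, iterate_advance_of_cost_le f t hm]
  rfl

def bisect (q : ℕ → Q) (lo hi : ℕ) : QueryTree Q ℕ :=
  if h : lo + 1 < hi then
    query (q ((lo + hi) / 2)) fun b =>
      if b then bisect q lo ((lo + hi) / 2) else bisect q ((lo + hi) / 2) hi
  else pure lo
termination_by hi - lo

theorem bisect_spec (f : Q → Bool) (q : ℕ → Q) {lo hi : ℕ} (hlt : lo < hi)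
    (hlo : f (q lo) = false) (hhi : f (q hi) = true) :
    (bisect q lo hi).eval f < hi ∧ f (q ((bisect q lo hi).eval f)) = false ∧
      f (q ((bisect q lo hi).eval f + 1)) = true := by
  fun_induction bisect q lo hi with
  | case1 lo hi h ihl ihr =>
    simp only [eval]
    cases hmid : f (q ((lo + hi) / 2))
    · simp only [Bool.false_eq_true, ↓reduceIte]
      exact ihr (by omega) hmid hhi
    · simp only [↓reduceIte]
      obtain ⟨hj, hj0, hj1⟩ := ihl (by omega) hlo hmid
      exact ⟨by omega, hj0, hj1⟩
  | case2 lo hi h =>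
    obtain rfl : hi = lo + 1 := by omega
    exact ⟨Nat.lt_succ_self lo, hlo, hhi⟩

theorem cost_bisect_le (f : Q → Bool) (q : ℕ → Q) (lo hi : ℕ) :
    (bisect q lo hi).cost f ≤ Nat.clog 2 (hi - lo) := by
  fun_induction bisect q lo hi with
  | case1 lo hi h ihl ihr =>
    have hhalf : Nat.clog 2 (hi - lo) = Nat.clog 2 ((hi - lo + 1) / 2) + 1 := by
      rw [Nat.clog_of_two_le one_lt_two (by omega)]
      congr 3
    have hleft : Nat.clog 2 ((lo + hi) / 2 - lo) ≤ Nat.clog 2 ((hi - lo + 1) / 2) :=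
      Nat.clog_mono_right 2 (by omega)
    have hright : Nat.clog 2 (hi - (lo + hi) / 2) ≤ Nat.clog 2 ((hi - lo + 1) / 2) :=
      Nat.clog_mono_right 2 (by omega)
    simp only [cost]
    split <;> omega
  | case2 lo hi h => simp [cost]

end QueryTree

open Finset

variable {n : ℕ}

def pointOf (S : Finset (Fin n)) : Fin n → Bool := fun i => decide (i ∈ S)

def ones (b : Fin n → Bool) : Finset (Fin n) := univ.filter fun i => b i = true

theorem pointOf_mono : Monotone (pointOf (n := n)) := fun S T hST i => by
  simpa [pointOf, Bool.le_iff_imp] using @hST i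

theorem le_pointOf_iff {b : Fin n → Bool} {S : Finset (Fin n)} :
    b ≤ pointOf S ↔ ones b ⊆ S := by
  simp [Pi.le_def, pointOf, ones, Bool.le_iff_imp, subset_iff]

theorem pointOf_ones (b : Fin n → Bool) : pointOf (ones b) = b := by
  funext i
  cases h : b i <;> simp [pointOf, ones, h]

theorem MonotoneBool.eq_false_of_le {f : (Fin n → Bool) → Bool} (hf : MonotoneBool f)
    {x y : Fin n → Bool} (hxy : x ≤ y) (hy : f y = false) : f x = false :=
  Bool.eq_false_of_le_false (hy ▸ hf x y hxy)

theorem exists_isMinterm_le (f : (Fin n → Bool) → Bool) {x : Fin n → Bool} (hx : f x = true) :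
    ∃ m ≤ x, IsMinterm f m := by
  obtain ⟨m, hmx, hm, hmin⟩ := exists_minimal_le_of_wellFoundedLT (fun y => f y = true) x hx
  exact ⟨m, hmx, hm, fun b hbm hb => le_antisymm hbm (hmin hb hbm)⟩

theorem mem_ones_of_essential {f : (Fin n → Bool) → Bool} (hf : MonotoneBool f)
    {b : Fin n → Bool} {S : Finset (Fin n)} (hbS : b ≤ pointOf S) (hb : f b = true) {i : Fin n}
    (hi : f (pointOf (S.erase i)) = false) : i ∈ ones b := by
  by_contra hib
  have hb_le : b ≤ pointOf (S.erase i) :=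
    le_pointOf_iff.mpr (subset_erase.mpr ⟨le_pointOf_iff.mp hbS, hib⟩)
  simp [hf.eq_false_of_le hb_le hi] at hb

theorem isMinterm_pointOf {f : (Fin n → Bool) → Bool} (hf : MonotoneBool f)
    {S : Finset (Fin n)} (hS : f (pointOf S) = true)
    (hess : ∀ i ∈ S, f (pointOf (S.erase i)) = false) : IsMinterm f (pointOf S) := by
  refine ⟨hS, fun b hbS hb => ?_⟩
  have hones : ones b = S := (le_pointOf_iff.mp hbS).antisymm fun i hi =>
    mem_ones_of_essential hf hbS hb (hess i hi)
  rw [← hones, pointOf_ones]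

theorem notMem_of_pointOf_insert {f : (Fin n → Bool) → Bool} {Y : Finset (Fin n)} {u : Fin n}
    (hY : f (pointOf Y) = false) (hYu : f (pointOf (insert u Y)) = true) : u ∉ Y := fun hu => by
  simp [insert_eq_of_mem hu, hY] at hYu

/-- The invariant of the search: `X` is a positive set below `a` from which no coordinate of `F`
can be removed, so that `F` lies in every minterm of `f` below `pointOf X`. -/
structure Certified (f : (Fin n → Bool) → Bool) (a : Fin n → Bool) (F X : Finset (Fin n)) :
    Prop where
  subset : F ⊆ X
  le : pointOf X ≤ a
  pos : f (pointOf X) = true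
  essential : ∀ i ∈ F, f (pointOf (X.erase i)) = false

namespace Certified

variable {f : (Fin n → Bool) → Bool} {a : Fin n → Bool} {F X : Finset (Fin n)}

theorem pointOf_le (h : Certified f a F X) : pointOf F ≤ a :=
  (pointOf_mono h.subset).trans h.le

theorem isMinterm (hf : MonotoneBool f) (h : Certified f a F X) (hF : f (pointOf F) = true) :
    IsMinterm f (pointOf F) :=
  isMinterm_pointOf hf hF fun i hi =>
    hf.eq_false_of_le (pointOf_mono (erase_subset_erase i h.subset)) (h.essential i hi)

theorem card_lt (hf : MonotoneBool f) {r : ℕ} (hr : ∀ x, IsMinterm f x → weight x ≤ r)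
    (h : Certified f a F X) (hF : f (pointOf F) = false) : F.card < r := by
  obtain ⟨m, hmX, hm⟩ := exists_isMinterm_le f h.pos
  have hFm : F ⊆ ones m := fun i hi => mem_ones_of_essential hf hmX hm.1 (h.essential i hi)
  have hFm' : F ≠ ones m := by
    rintro rfl
    simp [pointOf_ones, hm.1] at hF
  exact (card_lt_card (hFm.ssubset_of_ne hFm')).trans_le (hr m hm)

theorem insert (hf : MonotoneBool f) (h : Certified f a F X) {Y : Finset (Fin n)} {u : Fin n}
    (hFY : F ⊆ Y) (hYX : insert u Y ⊆ X) (hY : f (pointOf Y) = false)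
    (hYu : f (pointOf (insert u Y)) = true) : Certified f a (insert u F) (insert u Y) := by
  refine ⟨insert_subset_insert u hFY, (pointOf_mono hYX).trans h.le, hYu, ?_⟩
  intro i hi
  rcases mem_insert.mp hi with rfl | hi
  · rwa [erase_insert (notMem_of_pointOf_insert hY hYu)]
  · exact hf.eq_false_of_le (pointOf_mono (erase_subset_erase i hYX)) (h.essential i hi)

end Certified

def prefixSet (F : Finset (Fin n)) (U : List (Fin n)) (j : ℕ) : Finset (Fin n) :=
  F ∪ (U.take j).toFinset

theorem prefixSet_zero (F : Finset (Fin n)) (U : List (Fin n)) : prefixSet F U 0 = F := by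
  simp [prefixSet]

theorem prefixSet_succ (F : Finset (Fin n)) (U : List (Fin n)) {j : ℕ} (hj : j < U.length) :
    prefixSet F U (j + 1) = insert U[j] (prefixSet F U j) := by
  ext
  simp only [prefixSet, mem_union, mem_insert, List.mem_toFinset, List.take_add_one,
    List.getElem?_eq_getElem hj, Option.toList_some, List.mem_append, List.mem_singleton]
  tauto

theorem prefixSet_subset {F X : Finset (Fin n)} (hFX : F ⊆ X) (j : ℕ) :
    prefixSet F X.toList j ⊆ X :=
  union_subset hFX fun _ hi => mem_toList.mp (List.mem_of_mem_take (List.mem_toFinset.mp hi))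

theorem prefixSet_card {F X : Finset (Fin n)} (hFX : F ⊆ X) :
    prefixSet F X.toList X.card = X := by
  rw [prefixSet, ← length_toList, List.take_length, toList_toFinset, union_eq_right.mpr hFX]

/-- `k` is fuel bounding the number of rounds. The `none` branch is never taken, since the binary
search returns an index below `X.card`. -/
noncomputable def findMinterm :
    ℕ → Finset (Fin n) → Finset (Fin n) → QueryTree (Fin n → Bool) (Finset (Fin n))
  | 0, F, _ => .pure F
  | k + 1, F, X => .query (pointOf F) fun b =>
      if b then .pure F
      else (QueryTree.bisect (fun j => pointOf (prefixSet F X.toList j)) 0 X.card).bind fun j =>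
        match X.toList[j]? with
        | some u => findMinterm k (insert u F) (prefixSet F X.toList (j + 1))
        | none => .pure F

theorem cost_findMinterm_le (f : (Fin n → Bool) → Bool) :
    ∀ (k : ℕ) (F X : Finset (Fin n)), (findMinterm k F X).cost f ≤ k * (Nat.clog 2 n + 1)
  | 0, F, X => by simp [findMinterm, QueryTree.cost]
  | k + 1, F, X => by
    have hsearch : (QueryTree.bisect (fun j => pointOf (prefixSet F X.toList j)) 0 X.card).cost f
        ≤ Nat.clog 2 n :=
      (QueryTree.cost_bisect_le f _ 0 X.card).trans
        (Nat.clog_mono_right 2 (by simpa using card_le_univ X))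
    simp only [findMinterm, QueryTree.cost]
    split
    · simp only [QueryTree.cost]
      exact Nat.succ_le_of_lt (by positivity)
    · rw [QueryTree.cost_bind, Nat.succ_mul]
      split
      · calc _ ≤ Nat.clog 2 n + k * (Nat.clog 2 n + 1) + 1 := by
              gcongr
              exact cost_findMinterm_le f k _ _
          _ = k * (Nat.clog 2 n + 1) + (Nat.clog 2 n + 1) := by ring
      · simp only [QueryTree.cost]
        omega

theorem findMinterm_spec {f : (Fin n → Bool) → Bool} (hf : MonotoneBool f) {r : ℕ}
    (hr : ∀ x, IsMinterm f x → weight x ≤ r) {a : Fin n → Bool} :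
    ∀ (k : ℕ) (F X : Finset (Fin n)), Certified f a F X → r < F.card + k →
      IsMinterm f (pointOf ((findMinterm k F X).eval f)) ∧
        pointOf ((findMinterm k F X).eval f) ≤ a := by
  intro k
  induction k with
  | zero =>
    intro F X h hF
    have hpos : f (pointOf F) = true := by
      by_contra hneg
      exact absurd (h.card_lt hf hr (by simpa using hneg)) (by omega)
    exact ⟨h.isMinterm hf hpos, h.pointOf_le⟩
  | succ k ih =>
    intro F X h hk
    simp only [findMinterm, QueryTree.eval]
    cases hF : f (pointOf F)
    · have hcard := h.card_lt hf hr hF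
      simp only [Bool.false_eq_true, ↓reduceIte, QueryTree.eval_bind]
      have hFX : F.card < X.card := card_lt_card <| h.subset.ssubset_of_ne <| by
        rintro rfl
        simp [h.pos] at hF
      obtain ⟨hj, hneg, hpos⟩ :=
        QueryTree.bisect_spec f (fun j => pointOf (prefixSet F X.toList j)) (Nat.zero_lt_of_lt hFX)
          (by rwa [prefixSet_zero]) (by rw [prefixSet_card h.subset]; exact h.pos)
      set j := (QueryTree.bisect (fun j => pointOf (prefixSet F X.toList j)) 0 X.card).eval f
      rw [← length_toList] at hj
      rw [prefixSet_succ _ _ hj] at hpos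
      have hnext := h.insert hf subset_union_left
        (prefixSet_succ _ _ hj ▸ prefixSet_subset h.subset _) hneg hpos
      have hu : X.toList[j] ∉ F := fun hu =>
        notMem_of_pointOf_insert hneg hpos (mem_union_left _ hu)
      simp only [List.getElem?_eq_getElem hj, prefixSet_succ _ _ hj]
      exact ih _ _ hnext (by rw [card_insert_of_notMem hu]; omega)
    · exact ⟨h.isMinterm hf hF, h.pointOf_le⟩

theorem certified_ones {f : (Fin n → Bool) → Bool} {a : Fin n → Bool} (ha : f a = true) :
    Certified f a ∅ (ones a) :=
  ⟨empty_subset _, (pointOf_ones a).le, (pointOf_ones a).symm ▸ ha, by simp⟩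

theorem succ_mul_clog_succ_le {n r : ℕ} (hn : 2 ≤ n) (hr : 1 ≤ r) :
    (r + 1) * (Nat.clog 2 n + 1) ≤ ⌈6 * r * Real.logb 2 n⌉₊ := by
  have hlog : 1 ≤ Real.logb 2 n := by
    rw [Real.le_logb_iff_rpow_le one_lt_two (by positivity)]
    exact_mod_cast hn.trans' (by norm_num)
  have hclog : (Nat.clog 2 n : ℝ) < Real.logb 2 n + 1 := by
    have := Real.natCeil_logb_natCast 2 n
    push_cast at this
    exact this ▸ Nat.ceil_lt_add_one (by linarith)
  have hr' : (1 : ℝ) ≤ r := by exact_mod_cast hr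
  refine Nat.cast_le.mp (le_trans ?_ (Nat.le_ceil _))
  push_cast
  nlinarith

/-- There is a universal constant `c > 0` such that for all `n ≥ 2`, `r ≥ 1` and every
`a ∈ {0,1}^n`, some deterministic adaptive membership-query algorithm with point-valued
output and query budget `⌈c·r·log₂ n⌉` outputs, for every monotone target `f` with
`f a = 1` whose minterms all have weight at most `r`, a minterm `b` of `f` with `b ≤ a`. -/
theorem find_term_query_complexity :
    ∃ c : ℝ, 0 < c ∧ ∀ (n r : ℕ), 2 ≤ n → 1 ≤ r → ∀ a : Fin n → Bool,
      ∃ (σ : List Bool → (Fin n → Bool)) (out : List Bool → (Fin n → Bool)),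
        ∀ f : (Fin n → Bool) → Bool,
          MonotoneBool f → f a = true →
          (∀ x : Fin n → Bool, IsMinterm f x → weight x ≤ r) →
          IsMinterm f (out (transcript σ f ⌈c * r * Real.logb 2 n⌉₊)) ∧
            ∀ i, out (transcript σ f ⌈c * r * Real.logb 2 n⌉₊) i ≤ a i := by
  refine ⟨6, by norm_num, fun n r hn hr a => ?_⟩
  let t := findMinterm (r + 1) ∅ (ones a)
  refine ⟨fun l => (t.follow l).nextQuery, fun l => pointOf (t.follow l).result,
    fun f hf ha hweight => ?_⟩
  have hcost : t.cost f ≤ ⌈6 * r * Real.logb 2 n⌉₊ :=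
    (cost_findMinterm_le f _ _ _).trans (succ_mul_clog_succ_le hn hr)
  beta_reduce
  rw [QueryTree.result_follow_transcript t f hcost]
  exact findMinterm_spec hf hweight (r + 1) ∅ (ones a) (certified_ones ha) (by simp)
end

section
/- Let T_1,…,T_s be nonempty subsets of {1,…,n}, let f : {0,1}^n → {0,1} be defined by f(a) = 1 iff for some i ∈ {1,…,s} all coordinates of a indexed by T_i equal 1, and for p ≤ s let h(a) = 1 iff for some i ∈ {1,…,p} all coordinates of a indexed by T_i equal 1. If f ≠ h as functions, then there exist indices j_1 ∈ T_1, …, j_p ∈ T_p such that the assignment a which is 0 at coordinates j_1,…,j_p and 1 everywhere else satisfies h(a) = 0 and f(a) = 1. -/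
/-- Let `f` be the monotone DNF with terms `T₁, …, T_s` and `h` the disjunction of the
first `p ≤ s` terms.  If `f ≠ h`, then one can choose `j_i ∈ T_i` for each `i ≤ p` such
that the assignment which is `0` exactly at `j₁, …, j_p` and `1` everywhere else is `0`
on `h` and `1` on `f`. -/
theorem exhaustive_search_finds_witness
    (n s p : ℕ) (hp : p ≤ s)
    (T : Fin s → Finset (Fin n)) (hT : ∀ i, (T i).Nonempty)
    (f h : (Fin n → Bool) → Bool)
    (hf : ∀ a : Fin n → Bool, f a = true ↔ ∃ i : Fin s, ∀ j ∈ T i, a j = true)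
    (hh : ∀ a : Fin n → Bool, h a = true ↔ ∃ i : Fin s, i.val < p ∧ ∀ j ∈ T i, a j = true)
    (hne : f ≠ h) :
    ∃ J : Fin s → Fin n, (∀ i : Fin s, i.val < p → J i ∈ T i) ∧
      h (fun x => decide (∀ i : Fin s, i.val < p → x ≠ J i)) = false ∧
      f (fun x => decide (∀ i : Fin s, i.val < p → x ≠ J i)) = true := by
  -- find a with f a = true, h a = false
  obtain ⟨a, ha⟩ : ∃ a, f a ≠ h a := by
    by_contra hc
    push_neg at hc
    exact hne (funext hc)
  have himp : h a = true → f a = true := fun hha => by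
    obtain ⟨i, _, hi⟩ := (hh a).mp hha
    exact (hf a).mpr ⟨i, hi⟩
  have hfa : f a = true := by
    cases hfa : f a with
    | true => rfl
    | false =>
      cases hha : h a with
      | true => simpa [hfa, hha] using himp hha
      | false => simp [hfa, hha] at ha
  have hha : h a = false := by
    cases hha : h a with
    | true => exact absurd (hfa.trans hha.symm) ha
    | false => rfl
  -- for each i < p, some j ∈ T i with a j = false
  have hw : ∀ i : Fin s, i.val < p → ∃ j ∈ T i, a j = false := by
    intro i hip
    by_contra hc
    push_neg at hc
    have : h a = true := (hh a).mpr ⟨i, hip, fun j hj => by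
      have := hc j hj
      simpa using this⟩
    simp [this] at hha
  choose Jw hJw haJw using hw
  -- default element of Fin n
  have hn : 0 < n := by
    obtain ⟨i0, hi0⟩ := (hf a).mp hfa
    obtain ⟨j, _⟩ := hT i0
    exact j.pos
  set J : Fin s → Fin n := fun i =>
    if hip : i.val < p then Jw i hip else ⟨0, hn⟩ with hJ
  refine ⟨J, fun i hip => by simp [hJ, hip, hJw], ?_, ?_⟩
  · -- h is false on the new assignment
    rw [← Bool.not_eq_true]
    intro hht
    obtain ⟨i, hip, hi⟩ := (hh _).mp hht
    have := hi (J i) (by simp [hJ, hip, hJw])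
    simp [hip] at this
    exact this i hip rfl
  · -- f is true
    obtain ⟨i0, hi0⟩ := (hf a).mp hfa
    refine (hf _).mpr ⟨i0, fun j hj => ?_⟩
    simp only [decide_eq_true_eq]
    intro i hip hji
    have haj : a j = true := hi0 j hj
    have : a (J i) = false := by simp [hJ, hip, haJw]
    rw [hji] at haj
    simp [haj] at this
end

section
/- Let T_1,…,T_s be nonempty subsets of {1,…,n} each of size at most r, let f : {0,1}^n → {0,1} be defined by f(a) = 1 iff for some i ∈ {1,…,s} all coordinates of a indexed by T_i equal 1, for p ≤ s let h(a) = 1 iff for some i ∈ {1,…,p} all coordinates of a indexed by T_i equal 1, and let V = T_1 ∪ … ∪ T_p. Let A ⊆ {0,1}^V be a (p, r)-cover for V. If f ≠ h as functions, then there exists a ∈ A such that the extension a' ∈ {0,1}^n of a (equal to a on V and equal to 1 outside V) satisfies h(a') = 0 and f(a') = 1. -/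
/-- `A` is a `(p, q)`-cover for the set `V` of coordinates: for every pair of disjoint
subsets `J, K ⊆ V` with `|J| ≤ p` and `|K| ≤ q` there is `a ∈ A` that is `0` on `J`
and `1` on `K`.  (Elements of `{0,1}^V` are modelled as functions on all coordinates,
only their values on `V` being relevant.) -/
def IsCoverOn {n : ℕ} (V : Finset (Fin n)) (p q : ℕ) (A : Finset (Fin n → Bool)) : Prop :=
  ∀ J K : Finset (Fin n), J ⊆ V → K ⊆ V → Disjoint J K → J.card ≤ p → K.card ≤ q →
    ∃ a ∈ A, (∀ j ∈ J, a j = false) ∧ (∀ j ∈ K, a j = true)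

/-- Let `f` be the monotone DNF with terms `T₁, …, T_s` (each of size at most `r`), `h`
the disjunction of the first `p ≤ s` terms, `V` the union of the first `p` terms, and
`A` a `(p, r)`-cover for `V`.  If `f ≠ h`, then some `a ∈ A`, extended by ones outside
`V`, is `0` on `h` and `1` on `f`. -/
theorem cover_free_family_finds_witness
    (n s p r : ℕ) (hp : p ≤ s)
    (T : Fin s → Finset (Fin n)) (hT : ∀ i, (T i).Nonempty) (hTr : ∀ i, (T i).card ≤ r)
    (f h : (Fin n → Bool) → Bool)
    (hf : ∀ a : Fin n → Bool, f a = true ↔ ∃ i : Fin s, ∀ j ∈ T i, a j = true)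
    (hh : ∀ a : Fin n → Bool, h a = true ↔ ∃ i : Fin s, i.val < p ∧ ∀ j ∈ T i, a j = true)
    (V : Finset (Fin n)) (hV : V = (Finset.univ.filter fun i : Fin s => i.val < p).biUnion T)
    (A : Finset (Fin n → Bool)) (hA : IsCoverOn V p r A)
    (hne : f ≠ h) :
    ∃ a ∈ A, h (fun x => if x ∈ V then a x else true) = false ∧
      f (fun x => if x ∈ V then a x else true) = true := by
  classical
  -- find a point where f and h differ
  obtain ⟨b, hb⟩ : ∃ b, f b ≠ h b := by
    by_contra hc
    push_neg at hc
    exact hne (funext hc)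
  have himp : h b = true → f b = true := fun hb' => by
    obtain ⟨i, _, hi⟩ := (hh b).1 hb'
    exact (hf b).2 ⟨i, hi⟩
  have hfb : f b = true := by
    cases hfb : f b with
    | true => rfl
    | false =>
      cases hhb : h b with
      | false => exact absurd (hfb.trans hhb.symm) hb
      | true =>
        have := himp hhb
        rw [hfb] at this
        exact absurd this (by simp)
  have hhb : h b = false := by
    cases hhb : h b with
    | false => rfl
    | true => exact absurd (hfb.trans (hhb).symm) hb
  obtain ⟨i, hi⟩ := (hf b).1 hfb
  -- for each i' < p there is a false coordinate in T i'
  have hw : ∀ i' : Fin s, i'.val < p → ∃ j ∈ T i', b j = false := by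
    intro i' hi'
    by_contra hc
    push_neg at hc
    have : h b = true := (hh b).2 ⟨i', hi', fun j hj => by
      cases hbj : b j with
      | false => exact absurd hbj (hc j hj)
      | true => rfl⟩
    simp [this] at hhb
  choose g hg1 hg2 using hw
  set P : Finset (Fin s) := Finset.univ.filter fun i : Fin s => i.val < p with hP
  have hmemP : ∀ i' : Fin s, i' ∈ P ↔ i'.val < p := by
    intro i'; simp [hP]
  let J : Finset (Fin n) := P.attach.image fun x => g x.1 ((hmemP x.1).1 x.2)
  let K : Finset (Fin n) := T i ∩ V
  have hJV : J ⊆ V := by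
    intro j hj
    simp only [J, Finset.mem_image, Finset.mem_attach, true_and, Subtype.exists] at hj
    obtain ⟨i', hi', rfl⟩ := hj
    rw [hV]
    exact Finset.mem_biUnion.2 ⟨i', (hmemP i').2 ((hmemP i').1 hi'), hg1 _ _⟩
  have hKV : K ⊆ V := Finset.inter_subset_right
  have hJb : ∀ j ∈ J, b j = false := by
    intro j hj
    simp only [J, Finset.mem_image, Finset.mem_attach, true_and, Subtype.exists] at hj
    obtain ⟨i', hi', rfl⟩ := hj
    exact hg2 _ _
  have hdisj : Disjoint J K := by
    rw [Finset.disjoint_left]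
    intro j hjJ hjK
    have := hi j (Finset.mem_of_mem_inter_left hjK)
    rw [hJb j hjJ] at this
    exact absurd this (by simp)
  have hJcard : J.card ≤ p := by
    calc J.card ≤ P.attach.card := Finset.card_image_le
    _ = P.card := Finset.card_attach
    _ ≤ (Finset.range p).card := by
        apply Finset.card_le_card_of_injOn (fun i' : Fin s => i'.val)
        · intro i' hi'
          exact Finset.mem_range.2 ((hmemP i').1 hi')
        · intro x _ y _ hxy
          exact Fin.ext hxy
    _ = p := Finset.card_range p
  have hKcard : K.card ≤ r := le_trans (Finset.card_le_card Finset.inter_subset_left) (hTr i)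
  obtain ⟨a, haA, haJ, haK⟩ := hA J K hJV hKV hdisj hJcard hKcard
  refine ⟨a, haA, ?_, ?_⟩
  · -- h of extension is false
    by_contra hc
    rw [Bool.not_eq_false, hh] at hc
    obtain ⟨i', hi'p, hi'⟩ := hc
    have hjJ : g i' hi'p ∈ J := by
      simp only [J, Finset.mem_image, Finset.mem_attach, true_and, Subtype.exists]
      exact ⟨i', (hmemP i').2 hi'p, rfl⟩
    have hjV : g i' hi'p ∈ V := hJV hjJ
    have := hi' (g i' hi'p) (hg1 _ _)
    simp only [hjV, if_true] at this
    rw [haJ _ hjJ] at this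
    exact absurd this (by simp)
  · rw [hf]
    refine ⟨i, fun j hj => ?_⟩
    by_cases hjV : j ∈ V
    · simp only [hjV, if_true]
      exact haK j (Finset.mem_inter.2 ⟨hj, hjV⟩)
    · simp [hjV]
end

section
/- For all integers r ≥ 1 and s ≥ 1, the following inequality of real numbers holds: Σ_{i=1}^{r} (e·r·√(rs)/i)^i · (2e)^{r−i} · ((r−i)·√(s/r))^{r−i+3} ≤ (3e)^r · (rs)^{(r+3)/2}. -/
/-!
Put `w = √(rs)`, so that `√(s/r) = w / r`. Bounding `(r - i) w / r ≤ w` and `(r/i)^i ≤ C(r,i)`,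
the `i`-th summand is at most `C(r,i) 2^(r-i) e^r w^(r+3)`, and the binomial theorem bounds
the sum of these by `(1 + 2)^r e^r w^(r+3) = (3e)^r (rs)^((r+3)/2)`.
-/

open Real Finset

theorem Nat.pow_le_choose_mul_pow {n k : ℕ} (h : k ≤ n) : n ^ k ≤ n.choose k * k ^ k := by
  induction k generalizing n with
  | zero => simp
  | succ k ih =>
    obtain ⟨m, rfl⟩ : ∃ m, n = m + 1 := ⟨n - 1, by omega⟩
    have hkm : k ≤ m := by omega
    have hstep : (m + 1) ^ k * k ^ k ≤ m.choose k * (k + 1) ^ k * k ^ k :=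
      calc (m + 1) ^ k * k ^ k = ((m + 1) * k) ^ k := (mul_pow _ _ _).symm
        _ ≤ (m * (k + 1)) ^ k := Nat.pow_le_pow_left (by nlinarith) k -- as `k ≤ m`
        _ = m ^ k * (k + 1) ^ k := mul_pow _ _ _
        _ ≤ m.choose k * k ^ k * (k + 1) ^ k := Nat.mul_le_mul_right _ (ih hkm)
        _ = m.choose k * (k + 1) ^ k * k ^ k := by ring
    have hcancel := Nat.le_of_mul_le_mul_right hstep Nat.pow_self_pos
    calc (m + 1) ^ (k + 1) = (m + 1) * (m + 1) ^ k := by ring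
      _ ≤ (m + 1) * (m.choose k * (k + 1) ^ k) := Nat.mul_le_mul_left _ hcancel
      _ = (m + 1) * m.choose k * (k + 1) ^ k := by ring
      _ = (m + 1).choose (k + 1) * (k + 1) ^ (k + 1) := by
        rw [Nat.add_one_mul_choose_eq]; ring

theorem sum_Icc_choose_mul_pow_le {R : Type*} [CommSemiring R] [PartialOrder R]
    [IsOrderedRing R] (x : R) (hx : 0 ≤ x) (r : ℕ) :
    ∑ i ∈ Icc 1 r, (r.choose i : R) * x ^ (r - i) ≤ (1 + x) ^ r := by
  rw [add_pow]
  calc ∑ i ∈ Icc 1 r, (r.choose i : R) * x ^ (r - i)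
      ≤ ∑ i ∈ range (r + 1), (r.choose i : R) * x ^ (r - i) :=
        sum_le_sum_of_subset_of_nonneg (fun i hi => by simp only [mem_Icc, mem_range] at hi ⊢; omega)
          (fun _ _ _ => by positivity)
    _ = ∑ i ∈ range (r + 1), 1 ^ i * x ^ (r - i) * (r.choose i : R) := by
        refine sum_congr rfl fun i _ => ?_; ring

theorem Real.sqrt_div_eq_sqrt_mul_div (r s : ℝ) (hr : 0 ≤ r) : √(s / r) = √(r * s) / r := by
  rcases hr.eq_or_lt with rfl | hr
  · simp
  rw [Real.sqrt_mul hr.le, Real.sqrt_div' _ hr.le, mul_comm, mul_div_assoc, Real.sqrt_div_self,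
    div_eq_mul_inv]

theorem algorithmIV_summand_le {a w : ℝ} (ha : 0 ≤ a) (hw : 0 ≤ w) {r i : ℕ} (hi : 1 ≤ i)
    (hir : i ≤ r) :
    (a * r * w / i) ^ i * (2 * a) ^ (r - i) * (((r : ℝ) - i) * (w / r)) ^ (r - i + 3)
      ≤ r.choose i * 2 ^ (r - i) * (a ^ r * w ^ (r + 3)) := by
  have hi0 : (0 : ℝ) < i := by exact_mod_cast hi
  have hr0 : (0 : ℝ) < r := by exact_mod_cast hi.trans hir
  have hri : (0 : ℝ) ≤ r - i := sub_nonneg.mpr (by exact_mod_cast hir)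
  have hratio : ((r : ℝ) / i) ^ i ≤ r.choose i := by
    rw [div_pow, div_le_iff₀ (by positivity)]
    exact_mod_cast Nat.pow_le_choose_mul_pow hir
  have hfirst : (a * r * w / i) ^ i ≤ r.choose i * (a * w) ^ i := by
    rw [show a * r * w / i = a * w * (r / i) by ring, mul_pow, mul_comm]
    gcongr
  have hlast : ((r : ℝ) - i) * (w / r) ≤ w := by
    calc ((r : ℝ) - i) * (w / r) ≤ r * (w / r) := by gcongr; linarith
      _ = w := by field_simp
  obtain ⟨j, rfl⟩ : ∃ j, r = i + j := ⟨r - i, by omega⟩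
  rw [Nat.add_sub_cancel_left]
  calc (a * ↑(i + j) * w / ↑i) ^ i * (2 * a) ^ j * ((↑(i + j) - ↑i) * (w / ↑(i + j))) ^ (j + 3)
      ≤ (↑((i + j).choose i) * (a * w) ^ i) * (2 * a) ^ j * w ^ (j + 3) := by
        gcongr
    _ = _ := by ring

theorem algorithm_IV_sum_bound_general (r s : ℕ) :
    ∑ i ∈ Finset.Icc 1 r,
        (Real.exp 1 * r * Real.sqrt (r * s) / i) ^ i * (2 * Real.exp 1) ^ (r - i) *
          (((r : ℝ) - i) * Real.sqrt ((s : ℝ) / r)) ^ (r - i + 3)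
      ≤ (3 * Real.exp 1) ^ r * ((r : ℝ) * s) ^ (((r : ℝ) + 3) / 2) := by
  have hexp : (r : ℝ) + 3 = (r + 3 : ℕ) := by push_cast; rfl
  rw [Real.sqrt_div_eq_sqrt_mul_div _ _ r.cast_nonneg,
    Real.rpow_div_two_eq_sqrt _ (by positivity), hexp, rpow_natCast]
  calc _ ≤ ∑ i ∈ Icc 1 r, r.choose i * (2 : ℝ) ^ (r - i) * (exp 1 ^ r * √(r * s) ^ (r + 3)) :=
        sum_le_sum fun i hi => by
          rw [mem_Icc] at hi
          exact algorithmIV_summand_le (exp_pos 1).le (sqrt_nonneg _) hi.1 hi.2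
    _ = (∑ i ∈ Icc 1 r, r.choose i * (2 : ℝ) ^ (r - i)) * (exp 1 ^ r * √(r * s) ^ (r + 3)) :=
        (sum_mul ..).symm
    _ ≤ (1 + 2) ^ r * (exp 1 ^ r * √(r * s) ^ (r + 3)) := by
        gcongr
        exact sum_Icc_choose_mul_pow_le 2 zero_le_two r
    _ = _ := by ring

/-- The key estimate for Algorithm IV (with `d = r`):
`Σ_{i=1}^{r} (e·r·√(rs)/i)^i · (2e)^{r−i} · ((r−i)·√(s/r))^{r−i+3}
  ≤ (3e)^r · (rs)^{(r+3)/2}`. -/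
theorem algorithm_IV_sum_bound (r s : ℕ) (hr : 1 ≤ r) (hs : 1 ≤ s) :
    ∑ i ∈ Finset.Icc 1 r,
        (Real.exp 1 * r * Real.sqrt (r * s) / i) ^ i * (2 * Real.exp 1) ^ (r - i) *
          (((r : ℝ) - i) * Real.sqrt ((s : ℝ) / r)) ^ (r - i + 3)
      ≤ (3 * Real.exp 1) ^ r * ((r : ℝ) * s) ^ (((r : ℝ) + 3) / 2) :=
  algorithm_IV_sum_bound_general r s
end
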